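/- Let A be an I-modal ririg and X ⊆ A. The least I-filter containing X equals the up-set of the set of finite products M₁(x₁)·…·Mₙ(xₙ) where x₁,…,xₙ ∈ X and each Mᵢ is a finite composition (possibly empty) of modal operators from I. -/

import Mathlib

/-- An integral residuated rig (ririg). -/
class Ririg (A : Type*) extends CommMonoid A, SemilatticeSup A, OrderBot A, OrderTop A, HImp A where
  one_eq_top : (1 : A) = ⊤
  mul_sup : ∀ x y z : A, x * (y ⊔ z) = x * y ⊔ x * z
  mul_bot : ∀ x : A, x * ⊥ = ⊥
  residuation : ∀ a b c : A, a * b ≤ c ↔ a ≤ b ⇨ c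

/-- A modal operator on a ririg. -/
def IsModal {A : Type*} [Ririg A] (m : A → A) : Prop :=
  m 1 = 1 ∧ ∀ x y : A, m (x ⇨ y) ≤ m x ⇨ m y

/-- Interpretation of an I-block (finite composition of modal operators). -/
def blockApp {A ι : Type*} (f : ι → A → A) : List ι → A → A
  | [] => id
  | i :: L => f i ∘ blockApp f L

/-- I-filter. -/
def IsIFilter {A ι : Type*} [Ririg A] (f : ι → A → A) (F : Set A) : Prop :=
  F.Nonempty ∧ (∀ x y : A, x ∈ F → x ≤ y → y ∈ F) ∧
    (∀ x y : A, x ∈ F → y ∈ F → x * y ∈ F) ∧ (∀ i : ι, ∀ x : A, x ∈ F → f i x ∈ F)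

/-- Congruence of an I-modal ririg. -/
def IsRirigCon {A ι : Type*} [Ririg A] (f : ι → A → A) (θ : A → A → Prop) : Prop :=
  Equivalence θ ∧
    (∀ a b c d : A, θ a b → θ c d → θ (a ⊔ c) (b ⊔ d)) ∧
    (∀ a b c d : A, θ a b → θ c d → θ (a * c) (b * d)) ∧
    (∀ a b c d : A, θ a b → θ c d → θ (a ⇨ c) (b ⇨ d)) ∧
    (∀ i : ι, ∀ a b : A, θ a b → θ (f i a) (f i b))

/-!
Every element of the stated set lies above a product of blocks applied to elements of `X`, and
any I-filter containing `X` contains all such products, hence the whole set. Conversely the set is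
an I-filter: products concatenate, and a modal operator `m` is monotone and submultiplicative
(`m x * m y ≤ m (x * y)`, by residuation), so `m` applied to a product of blocks dominates the
product of the blocks lengthened by `m`.
-/

namespace Ririg

variable {A : Type*} [Ririg A]

theorem le_one (x : A) : x ≤ 1 := one_eq_top (A := A) ▸ le_top

theorem le_himp_mul (x y : A) : x ≤ y ⇨ x * y := (residuation x y (x * y)).mp le_rfl

instance : IsOrderedMonoid A where
  mul_le_mul_left a b h c := (residuation a c (b * c)).mpr (h.trans (le_himp_mul b c))

theorem one_le_himp {x y : A} (h : x ≤ y) : (1 : A) ≤ x ⇨ y :=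
  (residuation 1 x y).mp (by rwa [one_mul])

end Ririg

namespace IsModal

variable {A : Type*} [Ririg A] {m : A → A}

theorem monotone (hm : IsModal m) : Monotone m := fun x y h => by
  have h₁ : (1 : A) ≤ m x ⇨ m y := by
    simpa only [hm.1, le_antisymm (Ririg.le_one _) (Ririg.one_le_himp h)] using hm.2 x y
  simpa only [one_mul] using (Ririg.residuation 1 (m x) (m y)).mpr h₁

theorem mul_le (hm : IsModal m) (x y : A) : m x * m y ≤ m (x * y) :=
  (Ririg.residuation _ _ _).mpr <|
    (hm.monotone (Ririg.le_himp_mul x y)).trans (hm.2 y (x * y))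

theorem prod_map_le (hm : IsModal m) (l : List A) : (l.map m).prod ≤ m l.prod := by
  induction l with
  | nil => simp [hm.1]
  | cons a l ih =>
    simpa only [List.map_cons, List.prod_cons] using
      (mul_le_mul_right ih (m a)).trans (hm.mul_le a l.prod)

end IsModal

section BlockProducts

variable {A ι : Type*}

/-- The product `M₁(x₁) ⋯ Mₙ(xₙ)` encoded by the list of pairs `(Mₖ, xₖ)`. -/
def blockProd [CommMonoid A] (f : ι → A → A) (L : List (List ι × A)) : A :=
  (L.map fun p => blockApp f p.1 p.2).prod

theorem blockProd_append [CommMonoid A] (f : ι → A → A) (L₁ L₂ : List (List ι × A)) :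
    blockProd f (L₁ ++ L₂) = blockProd f L₁ * blockProd f L₂ := by
  simp only [blockProd, List.map_append, List.prod_append]

theorem blockProd_map_cons [CommMonoid A] (f : ι → A → A) (i : ι) (L : List (List ι × A)) :
    blockProd f (L.map fun p => (i :: p.1, p.2)) =
      ((L.map fun p => blockApp f p.1 p.2).map (f i)).prod := by
  simp only [blockProd, List.map_map, Function.comp_def, blockApp, Function.comp_apply]

theorem IsModal.le_apply_blockProd [Ririg A] {f : ι → A → A} {i : ι} (hfi : IsModal (f i))
    (L : List (List ι × A)) :
    blockProd f (L.map fun p => (i :: p.1, p.2)) ≤ f i (blockProd f L) := by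
  rw [blockProd_map_cons]
  exact hfi.prod_map_le _

def blockProdUpSet [CommMonoid A] [Preorder A] (f : ι → A → A) (X : Set A) : Set A :=
  {y | ∃ L : List (List ι × A), (∀ p ∈ L, p.2 ∈ X) ∧ blockProd f L ≤ y}

variable [Ririg A] {f : ι → A → A} {X : Set A}

theorem subset_blockProdUpSet : X ⊆ blockProdUpSet f X := fun x hx =>
  ⟨[([], x)], by simpa using hx, by simp [blockProd, blockApp]⟩

theorem isIFilter_blockProdUpSet (hf : ∀ i, IsModal (f i)) : IsIFilter f (blockProdUpSet f X) := by
  refine ⟨⟨1, [], by simp, by simp [blockProd]⟩, ?_, ?_, ?_⟩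
  · rintro x y ⟨L, hL, hle⟩ hxy
    exact ⟨L, hL, hle.trans hxy⟩
  · rintro x y ⟨L₁, hL₁, hle₁⟩ ⟨L₂, hL₂, hle₂⟩
    refine ⟨L₁ ++ L₂, fun p hp => (List.mem_append.mp hp).elim (hL₁ p) (hL₂ p), ?_⟩
    rw [blockProd_append]
    exact mul_le_mul' hle₁ hle₂
  · rintro i x ⟨L, hL, hle⟩
    refine ⟨L.map fun p => (i :: p.1, p.2), ?_, ?_⟩
    · simpa only [List.mem_map, forall_exists_index, and_imp, forall_apply_eq_imp_iff₂] using hL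
    · exact ((hf i).le_apply_blockProd L).trans ((hf i).monotone hle)

namespace IsIFilter

variable {F : Set A}

theorem one_mem (hF : IsIFilter f F) : (1 : A) ∈ F :=
  let ⟨a, ha⟩ := hF.1
  hF.2.1 a 1 ha (Ririg.le_one a)

theorem blockApp_mem (hF : IsIFilter f F) (M : List ι) {x : A} (hx : x ∈ F) :
    blockApp f M x ∈ F := by
  induction M with
  | nil => exact hx
  | cons i M ih => exact hF.2.2.2 i _ ih

theorem blockProd_mem (hF : IsIFilter f F) {L : List (List ι × A)} (hL : ∀ p ∈ L, p.2 ∈ F) :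
    blockProd f L ∈ F := by
  induction L with
  | nil => simpa [blockProd] using hF.one_mem
  | cons p L ih =>
    simpa [blockProd] using hF.2.2.1 _ _ (hF.blockApp_mem p.1 (hL p List.mem_cons_self))
      (ih fun q hq => hL q (List.mem_cons_of_mem p hq))

theorem blockProdUpSet_subset (hF : IsIFilter f F) (hX : X ⊆ F) : blockProdUpSet f X ⊆ F := by
  rintro y ⟨L, hL, hle⟩
  exact hF.2.1 _ y (hF.blockProd_mem fun p hp => hX (hL p hp)) hle

end IsIFilter

end BlockProducts

theorem stmt10 {A ι : Type*} [Ririg A] (f : ι → A → A) (hf : ∀ i, IsModal (f i))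
    (X : Set A) :
    IsLeast {F : Set A | IsIFilter f F ∧ X ⊆ F}
      {y : A | ∃ L : List (List ι × A), (∀ p ∈ L, p.2 ∈ X) ∧
        (L.map (fun p => blockApp f p.1 p.2)).prod ≤ y} :=
  ⟨⟨isIFilter_blockProdUpSet hf, subset_blockProdUpSet⟩,
    fun _ ⟨hF, hX⟩ => hF.blockProdUpSet_subset hX⟩
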